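/- Let G be a group and 𝒢 a finite subset of G. The semigroup generated by 𝒢 contains the neutral element of G if and only if there exists a nonempty subset ℋ ⊆ 𝒢 such that the semigroup generated by ℋ is a group. -/

import Mathlib

/-!
If `g₁ ⋯ gₙ = 1` with every `gᵢ ∈ 𝒢`, take `ℋ = {g₁, …, gₙ}`. Its semigroup contains `1`, and
also every `gᵢ⁻¹`, which is the cyclic rotation `gᵢ₊₁ ⋯ gₙ g₁ ⋯ gᵢ₋₁` of the relation; a
semigroup of a group containing `1` and the inverses of its generators is the generated subgroup.
Conversely, `1` lies in any subgroup, hence in the semigroup of such an `ℋ ⊆ 𝒢`.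
-/

namespace Subsemigroup

theorem list_prod_mem_closure {M : Type*} [Monoid M] {s : Set M} {l : List M} (hl : l ≠ [])
    (hls : ∀ x ∈ l, x ∈ s) : l.prod ∈ closure s := by
  induction l with
  | nil => exact absurd rfl hl
  | cons a t ih =>
    have ha : a ∈ closure s := subset_closure (hls a List.mem_cons_self)
    rcases eq_or_ne t [] with rfl | ht
    · simpa using ha
    · rw [List.prod_cons]
      exact mul_mem ha (ih ht fun x hx => hls x (List.mem_cons_of_mem a hx))

theorem exists_list_of_mem_closure {M : Type*} [Monoid M] {s : Set M} {x : M}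
    (hx : x ∈ closure s) : ∃ l : List M, l ≠ [] ∧ (∀ y ∈ l, y ∈ s) ∧ l.prod = x := by
  induction hx using closure_induction with
  | mem a ha => exact ⟨[a], List.cons_ne_nil a [], by simpa using ha, List.prod_singleton⟩
  | mul a b _ _ ha hb =>
    obtain ⟨l₁, hl₁, hl₁s, rfl⟩ := ha
    obtain ⟨l₂, -, hl₂s, rfl⟩ := hb
    refine ⟨l₁ ++ l₂, List.append_ne_nil_of_left_ne_nil hl₁ l₂, fun y hy => ?_, List.prod_append⟩
    exact (List.mem_append.mp hy).elim (hl₁s y) (hl₂s y)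

theorem coe_closure_eq_subgroup_closure {G : Type*} [Group G] {s : Set G}
    (one_mem : (1 : G) ∈ closure s) (inv_mem : ∀ x ∈ s, x⁻¹ ∈ closure s) :
    (closure s : Set G) = Subgroup.closure s := by
  have inv_subset : s⁻¹ ⊆ Submonoid.closure s := fun x hx =>
    Submonoid.closure_eq_one_union s ▸ Or.inr (inv_inv x ▸ inv_mem x⁻¹ hx)
  have closure_union_inv : Submonoid.closure (s ∪ s⁻¹) = Submonoid.closure s :=
    le_antisymm (Submonoid.closure_le.2 (Set.union_subset Submonoid.subset_closure inv_subset))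
      (Submonoid.closure_mono Set.subset_union_left)
  rw [← Subgroup.coe_toSubmonoid, Subgroup.closure_toSubmonoid, closure_union_inv,
    Submonoid.closure_eq_one_union, Set.union_eq_self_of_subset_left]
  exact Set.singleton_subset_iff.2 one_mem

end Subsemigroup

theorem inv_mem_closure_of_prod_eq_one {G : Type*} [Group G] {l : List G} (hl : l.prod = 1)
    {g : G} (hg : g ∈ l) : g⁻¹ ∈ Subsemigroup.closure {x | x ∈ l} := by
  obtain ⟨a, b, rfl⟩ := List.append_of_mem hg
  -- appending the relation itself keeps the word nonempty when `a = b = []`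
  have rotation : (b ++ a ++ (a ++ g :: b)).prod = g⁻¹ := by
    simp only [List.prod_append, List.prod_cons] at hl ⊢
    rw [hl, mul_one]
    exact eq_inv_of_mul_eq_one_right (by rw [← mul_assoc]; exact mul_eq_one_comm.1 hl)
  rw [← rotation]
  refine Subsemigroup.list_prod_mem_closure (by simp) fun x hx => ?_
  simp only [List.mem_append, List.mem_cons] at hx ⊢
  tauto

/-- The semigroup generated by a finite subset `𝒢` of a group contains the identity iff
some nonempty subset `ℋ ⊆ 𝒢` generates a semigroup that is a group. -/
theorem stmt1 {G : Type*} [Group G] (𝒢 : Finset G) :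
    (1 : G) ∈ Subsemigroup.closure (𝒢 : Set G) ↔
      ∃ ℋ : Finset G, ℋ ⊆ 𝒢 ∧ ℋ.Nonempty ∧
        (Subsemigroup.closure (ℋ : Set G) : Set G) = (Subgroup.closure (ℋ : Set G) : Set G) := by
  classical
  constructor
  · intro one_mem
    obtain ⟨l, hl, hl𝒢, hprod⟩ := Subsemigroup.exists_list_of_mem_closure one_mem
    refine ⟨l.toFinset, fun x hx => hl𝒢 x (List.mem_toFinset.1 hx),
      List.toFinset_nonempty_iff l |>.2 hl, ?_⟩
    rw [List.coe_toFinset]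
    exact Subsemigroup.coe_closure_eq_subgroup_closure
      (hprod ▸ Subsemigroup.list_prod_mem_closure hl fun x hx => hx)
      fun g hg => inv_mem_closure_of_prod_eq_one hprod hg
  · rintro ⟨ℋ, hℋ𝒢, -, hℋ⟩
    have one_mem_ℋ : (1 : G) ∈ (Subsemigroup.closure (ℋ : Set G) : Set G) := hℋ ▸ one_mem _
    exact Subsemigroup.closure_mono (Finset.coe_subset.2 hℋ𝒢) one_mem_ℋ
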